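/- Let G be an infinite discrete group and μ a finitely supported symmetric probability measure on G whose support generates G. If f ∈ ℓ²(G) satisfies Pf = f, where Pf(x) = ∑_y μ(y) f(xy), then f = 0. -/

import Mathlib

/-!
Maximum principle. A function in `ℓ²(G)` tends to `0` at infinity, so if `f ≠ 0` then `|f|`
attains its maximum, and after replacing `f` by `-f` we may assume `f` attains a positive maximum
`M`. At a point where `f = M`, the identity `f x = ∑ μ y f (x y)` expresses `M` as an average of
values `≤ M`, so `f (x y) = M` for every `y` in the support of `μ`. Hence the level set `{f = M}`,
which is finite because `f → 0`, is stable under right multiplication by a generating set. A finite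
set mapped into itself by an injective map is mapped onto itself, so it is stable under the whole
generated group, i.e. it is all of `G`, contradicting that `G` is infinite.
-/

open Function Filter Topology

theorem Memℓp.tendsto_cofinite_zero {α E : Type*} [NormedAddCommGroup E]
    {p : ENNReal} (hp : 0 < p.toReal) {f : α → E} (hf : Memℓp f p) :
    Tendsto f cofinite (𝓝 0) := by
  rw [tendsto_zero_iff_norm_tendsto_zero]
  have h := ((hf.summable hp).tendsto_cofinite_zero).rpow_const (p := p.toReal⁻¹)
    (Or.inr (by positivity))
  rw [Real.zero_rpow (by positivity)] at h
  refine h.congr fun i => ?_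
  rw [← Real.rpow_mul (norm_nonneg _), mul_inv_cancel₀ hp.ne', Real.rpow_one]

theorem exists_forall_norm_le_of_tendsto_cofinite_zero {α E : Type*} [NormedAddCommGroup E]
    {f : α → E} (hf : Tendsto f cofinite (𝓝 0)) {i₀ : α} (hi₀ : f i₀ ≠ 0) :
    ∃ i₁, ∀ i, ‖f i‖ ≤ ‖f i₁‖ := by
  have hfin : {i | ‖f i₀‖ ≤ ‖f i‖}.Finite := by
    have hlt := (tendsto_zero_iff_norm_tendsto_zero.mp hf).eventually_lt_const
      (norm_pos_iff.mpr hi₀)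
    simpa only [not_lt] using eventually_cofinite.mp hlt
  obtain ⟨i₁, hi₁, hmax⟩ :=
    Set.exists_max_image _ (fun i => ‖f i‖) hfin ⟨i₀, (le_rfl : ‖f i₀‖ ≤ ‖f i₀‖)⟩
  refine ⟨i₁, fun i => ?_⟩
  by_cases hi : ‖f i₀‖ ≤ ‖f i‖
  · exact hmax i hi
  · exact (not_le.mp hi).le.trans hi₁

theorem eq_of_finsum_mul_eq_of_le {ι : Type*} {w v : ι → ℝ} {M : ℝ} (hw : ∀ i, 0 ≤ w i)
    (hwfin : (support w).Finite) (hwsum : ∑ᶠ i, w i = 1) (hv : ∀ i, v i ≤ M)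
    (havg : ∑ᶠ i, w i * v i = M) {i : ι} (hi : w i ≠ 0) : v i = M := by
  set s := hwfin.toFinset
  have hsupp : support (fun j => w j * v j) ⊆ s := by
    intro j hj
    simpa [s] using left_ne_zero_of_mul hj
  have hle : ∀ j ∈ s, w j * v j ≤ w j * M := fun j _ => mul_le_mul_of_nonneg_left (hv j) (hw j)
  have hsum : ∑ j ∈ s, w j * v j = ∑ j ∈ s, w j * M := by
    rw [← Finset.sum_mul, ← finsum_eq_finsetSum_of_support_subset _ hsupp,
      ← finsum_eq_sum w hwfin, havg, hwsum, one_mul]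
  have := (Finset.sum_eq_sum_iff_of_le hle).mp hsum i (by simpa [s] using hi)
  exact mul_left_cancel₀ hi this

theorem Set.Finite.image_mul_right_eq_of_mem_closure {G : Type*} [Group G] {A S : Set G}
    (hA : A.Finite) (hAS : ∀ x ∈ A, ∀ s ∈ S, x * s ∈ A) {y : G}
    (hy : y ∈ Subgroup.closure S) : (· * y) '' A = A := by
  induction hy using Subgroup.closure_induction with
  | mem s hs =>
    have hmaps : MapsTo (· * s) A A := fun x hx => hAS x hx s hs
    exact ((hA.injOn_iff_bijOn_of_mapsTo hmaps).mp (mul_left_injective s).injOn).image_eq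
  | one => simp
  | mul a b _ _ ha hb =>
    rw [show (· * (a * b)) = (· * b) ∘ (· * a) from funext fun x => (mul_assoc x a b).symm,
      image_comp, ha, hb]
  | inv a _ ha =>
    nth_rw 1 [← ha]
    rw [image_image]
    simp

theorem Set.Finite.eq_univ_of_forall_mul_mem {G : Type*} [Group G] {A S : Set G}
    (hA : A.Finite) (hne : A.Nonempty) (hS : Subgroup.closure S = ⊤)
    (hAS : ∀ x ∈ A, ∀ s ∈ S, x * s ∈ A) : A = univ := by
  obtain ⟨x₁, hx₁⟩ := hne
  refine eq_univ_of_forall fun x => ?_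
  have h := hA.image_mul_right_eq_of_mem_closure hAS (y := x₁⁻¹ * x) (by simp [hS])
  rw [← h]
  exact ⟨x₁, hx₁, mul_inv_cancel_left x₁ x⟩

section Harmonic

variable {G : Type*} [Group G] [Infinite G] {μ : G → ℝ} (hμpos : ∀ y, 0 ≤ μ y)
  (hμfin : (support μ).Finite) (hμsum : ∑ᶠ y, μ y = 1) (hμgen : Subgroup.closure (support μ) = ⊤)
include hμpos hμfin hμsum hμgen

theorem not_forall_le_of_harmonic_of_tendsto_cofinite_zero {f : G → ℝ}
    (hharm : ∀ x, ∑ᶠ y, μ y * f (x * y) = f x) (hf : Tendsto f cofinite (𝓝 0)) {x₁ : G}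
    (hx₁ : 0 < f x₁) : ¬ ∀ x, f x ≤ f x₁ := by
  intro hmax
  set A := {x | f x = f x₁}
  have hA : A.Finite := by
    simpa only [not_not] using eventually_cofinite.mp (hf.eventually_ne hx₁.ne)
  have hAS : ∀ x ∈ A, ∀ y ∈ support μ, x * y ∈ A := fun x hx y hy =>
    eq_of_finsum_mul_eq_of_le hμpos hμfin hμsum (fun y => hmax (x * y)) ((hharm x).trans hx) hy
  exact Set.infinite_univ (hA.eq_univ_of_forall_mul_mem ⟨x₁, rfl⟩ hμgen hAS ▸ hA)

theorem eq_zero_of_harmonic_of_tendsto_cofinite_zero {f : G → ℝ}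
    (hharm : ∀ x, ∑ᶠ y, μ y * f (x * y) = f x) (hf : Tendsto f cofinite (𝓝 0)) : f = 0 := by
  ext x₀
  by_contra hx₀
  obtain ⟨x₁, hx₁⟩ := exists_forall_norm_le_of_tendsto_cofinite_zero hf hx₀
  simp only [Real.norm_eq_abs] at hx₁
  have hx₁0 : f x₁ ≠ 0 := abs_pos.mp ((abs_pos.mpr hx₀).trans_le (hx₁ x₀))
  rcases hx₁0.lt_or_gt with hneg | hpos
  · refine not_forall_le_of_harmonic_of_tendsto_cofinite_zero hμpos hμfin hμsum hμgen
      (f := -f) (fun x => ?_) (by rw [← neg_zero]; exact hf.neg) (neg_pos.mpr hneg) fun x => ?_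
    · simp only [Pi.neg_apply, mul_neg, finsum_neg_distrib, hharm]
    · simpa [abs_of_neg hneg] using (neg_le_abs (f x)).trans (hx₁ x)
  · exact not_forall_le_of_harmonic_of_tendsto_cofinite_zero hμpos hμfin hμsum hμgen hharm hf
      hpos fun x => (le_abs_self _).trans ((hx₁ x).trans_eq (abs_of_pos hpos))

end Harmonic

theorem stmt_1_general {G : Type*} [Group G] [Infinite G] (μ : G → ℝ) (f : G → ℝ)
    (hμpos : ∀ y, 0 ≤ μ y) (hμfin : (Function.support μ).Finite)
    (hμsum : ∑ᶠ y, μ y = 1)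
    (hμgen : Subgroup.closure (Function.support μ) = ⊤)
    (hf : Memℓp f 2)
    (hharm : ∀ x, ∑ᶠ y, μ y * f (x * y) = f x) :
    f = 0 :=
  eq_zero_of_harmonic_of_tendsto_cofinite_zero hμpos hμfin hμsum hμgen hharm
    (hf.tendsto_cofinite_zero (by norm_num))

theorem stmt_1 {G : Type*} [Group G] [Infinite G] (μ : G → ℝ) (f : G → ℝ)
    (hμpos : ∀ y, 0 ≤ μ y) (hμfin : (Function.support μ).Finite)
    (hμsum : ∑ᶠ y, μ y = 1)
    (hμsymm : ∀ y, μ y = μ y⁻¹)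
    (hμgen : Subgroup.closure (Function.support μ) = ⊤)
    (hf : Memℓp f 2)
    (hharm : ∀ x, ∑ᶠ y, μ y * f (x * y) = f x) :
    f = 0 :=
  stmt_1_general μ f hμpos hμfin hμsum hμgen hf hharm
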